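/- Let G be a twin-free graph of diameter 2. Then β(G) ≤ γID(G) ≤ 2β(G) + 2, where γID(G) is the minimum size of an identifying code and β(G) is the metric dimension. -/

import Mathlib

/-!
In diameter two the distance from `x` to `u ≠ x` is `1` or `2` according as `x ∈ N[u]` or not.
Hence an identifying code resolves, giving `β ≤ γID`; conversely a resolving set `S` is locating:
vertices outside `S` are determined by their traces `N[u] ∩ S`. Vertices with equal trace form
classes containing at most one vertex outside `S`, and by Bondy's theorem a class of `k` vertices
(pairwise non-twins) is separated by `k - 1` further vertices; summed over the classes this costs at
most `|S|`. Adding the unique vertex with empty trace, if any, for domination yields an identifying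
code of size at most `2β + 1`.
-/

open Finset

namespace Finset

variable {α β γ : Type*} [DecidableEq β]

lemma inter_eq_inter_of_subset {s t A D : Finset β} (h : s ∩ D = t ∩ D) (hA : A ⊆ D) :
    s ∩ A = t ∩ A := by
  rw [← inter_eq_right.mpr hA, ← inter_assoc, h, inter_assoc]

-- Bondy's theorem: `k` distinct sets are told apart by their traces on some `k - 1` points.
lemma exists_card_le_injOn_inter (N : α → Finset β) (W : Finset α)
    (hN : Set.InjOn N W) :
    ∃ A : Finset β, #A ≤ #W - 1 ∧ Set.InjOn (fun u ↦ N u ∩ A) W := by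
  induction W using Finset.strongInduction with
  | H W ih =>
  by_cases hW : #W ≤ 1
  · exact ⟨∅, by simp, fun u hu v hv _ ↦ card_le_one.mp hW u hu v hv⟩
  obtain ⟨u, hu, v, hv, huv⟩ := one_lt_card.mp (not_le.mp hW)
  obtain ⟨w, hw⟩ : ∃ w, ¬(w ∈ N u ↔ w ∈ N v) := by
    by_contra! h
    exact huv (hN hu hv (ext h))
  -- split `W` according to membership of `w`, separate both halves, and add `w`
  have hW₁ : W.filter (w ∈ N ·) ⊂ W := filter_ssubset.mpr (by grind)
  have hW₂ : W.filter (w ∉ N ·) ⊂ W := filter_ssubset.mpr (by grind)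
  obtain ⟨A₁, hA₁, hsep₁⟩ := ih _ hW₁ (hN.mono (coe_subset.mpr hW₁.subset))
  obtain ⟨A₂, hA₂, hsep₂⟩ := ih _ hW₂ (hN.mono (coe_subset.mpr hW₂.subset))
  refine ⟨insert w (A₁ ∪ A₂), ?_, ?_⟩
  · have hsplit := card_filter_add_card_filter_not (s := W) (w ∈ N ·)
    have hpos₁ : 0 < #(W.filter (w ∈ N ·)) := card_pos.mpr (by grind)
    have hpos₂ : 0 < #(W.filter (w ∉ N ·)) := card_pos.mpr (by grind)
    have := card_insert_le w (A₁ ∪ A₂)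
    have := card_union_le A₁ A₂
    omega
  · intro a ha b hb hab
    have hwab : w ∈ N a ↔ w ∈ N b := by simpa using congrArg (w ∈ ·) hab
    by_cases hwa : w ∈ N a
    · exact hsep₁ (mem_filter.mpr ⟨ha, hwa⟩) (mem_filter.mpr ⟨hb, hwab.mp hwa⟩)
        (inter_eq_inter_of_subset hab (by grind))
    · exact hsep₂ (mem_filter.mpr ⟨ha, hwa⟩) (mem_filter.mpr ⟨hb, mt hwab.mpr hwa⟩)
        (inter_eq_inter_of_subset hab (by grind))

lemma exists_card_add_card_image_le [DecidableEq γ] (N : α → Finset β) (f : α → γ)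
    (W : Finset α) (hN : Set.InjOn N W) :
    ∃ E : Finset β, #E + #(W.image f) ≤ #W ∧
      ∀ u ∈ W, ∀ v ∈ W, f u = f v → N u ∩ E = N v ∩ E → u = v := by
  choose A hA hsep using fun t ↦ exists_card_le_injOn_inter N (W.filter (f · = t))
    (hN.mono (coe_subset.mpr (filter_subset _ _)))
  refine ⟨(W.image f).biUnion A, ?_, fun u hu v hv hf h ↦ ?_⟩
  · have hfiber : ∀ t ∈ W.image f, #(A t) + 1 ≤ #(W.filter (f · = t)) := by
      intro t ht
      have : 0 < #(W.filter (f · = t)) := card_pos.mpr (by simpa [Finset.Nonempty] using ht)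
      have := hA t
      omega
    calc #((W.image f).biUnion A) + #(W.image f)
        ≤ ∑ t ∈ W.image f, #(A t) + ∑ t ∈ W.image f, 1 := by
          rw [card_eq_sum_ones (W.image f)]; gcongr; exact card_biUnion_le
      _ ≤ ∑ t ∈ W.image f, #(W.filter (f · = t)) := by
          rw [← sum_add_distrib]; exact sum_le_sum hfiber
      _ = #W := (card_eq_sum_card_image f W).symm
  · exact hsep (f u) (by simp [hu]) (by simp [hv, hf])
      (inter_eq_inter_of_subset h (subset_biUnion_of_mem A (mem_image_of_mem f hu)))

end Finset

namespace SimpleGraph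

variable {V : Type*} [DecidableEq V]

section

variable {G : SimpleGraph V} [DecidableRel G.Adj]

lemma dist_eq_of_diam_le_two (hconn : G.Connected) (hdiam : ∀ u v, G.dist u v ≤ 2) (x u : V) :
    G.dist x u = if x = u then 0 else if G.Adj x u then 1 else 2 := by
  split_ifs with hxu hadj
  · simp [hxu]
  · exact dist_eq_one_iff_adj.mpr hadj
  · have h0 : G.dist x u ≠ 0 := fun h ↦ hxu (hconn.dist_eq_zero_iff.mp h)
    have h1 : G.dist x u ≠ 1 := fun h ↦ hadj (dist_eq_one_iff_adj.mp h)
    have := hdiam x u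
    omega

end

variable [Fintype V] (G : SimpleGraph V) [DecidableRel G.Adj]

def closedNeighborFinset (u : V) : Finset V := insert u (G.neighborFinset u)

def IsResolvingSet (S : Finset V) : Prop := ∀ u v, u ≠ v → ∃ x ∈ S, G.dist x u ≠ G.dist x v

def IsDominatingSet (C : Finset V) : Prop := ∀ u, (G.closedNeighborFinset u ∩ C).Nonempty

def IsLocatingSet (S : Finset V) : Prop :=
  Set.InjOn (fun u ↦ G.closedNeighborFinset u ∩ S) ↑Sᶜ

def IsSeparatingSet (C : Finset V) : Prop :=
  ∀ u v, G.closedNeighborFinset u ∩ C = G.closedNeighborFinset v ∩ C → u = v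

variable {G}

lemma mem_closedNeighborFinset {u x : V} : x ∈ G.closedNeighborFinset u ↔ x = u ∨ G.Adj x u := by
  simp [closedNeighborFinset, adj_comm]

lemma IsDominatingSet.mono {C D : Finset V} (hC : G.IsDominatingSet C) (hCD : C ⊆ D) :
    G.IsDominatingSet D :=
  fun u ↦ (hC u).mono (inter_subset_inter_left hCD)

lemma IsSeparatingSet.mono {C D : Finset V} (hC : G.IsSeparatingSet C) (hCD : C ⊆ D) :
    G.IsSeparatingSet D :=
  fun u v h ↦ hC u v (inter_eq_inter_of_subset h hCD)

lemma IsSeparatingSet.isResolvingSet (hconn : G.Connected) (hdiam : ∀ u v, G.dist u v ≤ 2)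
    {C : Finset V} (hC : G.IsSeparatingSet C) : G.IsResolvingSet C := by
  intro u v huv
  obtain ⟨x, hx⟩ :
      ∃ x, ¬(x ∈ G.closedNeighborFinset u ∩ C ↔ x ∈ G.closedNeighborFinset v ∩ C) := by
    by_contra! h
    exact huv (hC u v (ext h))
  refine ⟨x, (by grind : x ∈ C), ?_⟩
  simp only [mem_inter, mem_closedNeighborFinset] at hx
  rw [dist_eq_of_diam_le_two hconn hdiam, dist_eq_of_diam_le_two hconn hdiam]
  grind

lemma IsResolvingSet.isLocatingSet (hconn : G.Connected) (hdiam : ∀ u v, G.dist u v ≤ 2)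
    {S : Finset V} (hS : G.IsResolvingSet S) : G.IsLocatingSet S := by
  intro u hu v hv huv
  by_contra hne
  obtain ⟨x, hxS, hx⟩ := hS u v hne
  have hxN := congrArg (x ∈ ·) huv
  simp only [mem_inter, mem_closedNeighborFinset, hxS, and_true, eq_iff_iff] at hxN
  simp only [coe_compl, Set.mem_compl_iff, mem_coe] at hu hv
  rw [dist_eq_of_diam_le_two hconn hdiam, dist_eq_of_diam_le_two hconn hdiam] at hx
  grind

lemma IsLocatingSet.exists_isSeparatingSet_card_le
    (htwin : Function.Injective G.closedNeighborFinset) {S : Finset V} (hS : G.IsLocatingSet S) :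
    ∃ D, S ⊆ D ∧ G.IsSeparatingSet D ∧ #D ≤ 2 * #S := by
  obtain ⟨E, hE, hsep⟩ := exists_card_add_card_image_le G.closedNeighborFinset
    (fun u ↦ G.closedNeighborFinset u ∩ S) univ htwin.injOn
  have himage : #Sᶜ ≤ #(univ.image fun u ↦ G.closedNeighborFinset u ∩ S) := by
    rw [← card_image_of_injOn hS]
    exact card_le_card (image_subset_image (subset_univ _))
  refine ⟨S ∪ E, subset_union_left, fun u v h ↦ ?_, ?_⟩
  · exact hsep u (mem_univ u) v (mem_univ v) (inter_eq_inter_of_subset h subset_union_left)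
      (inter_eq_inter_of_subset h subset_union_right)
  · have := card_union_le S E
    have := card_compl S
    have := card_univ (α := V)
    omega

lemma IsLocatingSet.card_filter_inter_eq_empty_le_one {S : Finset V} (hS : G.IsLocatingSet S) :
    #(univ.filter fun u ↦ G.closedNeighborFinset u ∩ S = ∅) ≤ 1 := by
  have hnot : ∀ u, G.closedNeighborFinset u ∩ S = ∅ → u ∈ (↑Sᶜ : Set V) := by
    intro u hu
    rw [coe_compl, Set.mem_compl_iff, mem_coe]
    intro huS
    have : u ∈ G.closedNeighborFinset u ∩ S := mem_inter.mpr ⟨mem_insert_self _ _, huS⟩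
    simp [hu] at this
  refine card_le_one.mpr fun u hu v hv ↦ hS (hnot u ?_) (hnot v ?_) ?_ <;> grind

lemma isDominatingSet_union_filter (S : Finset V) :
    G.IsDominatingSet (S ∪ univ.filter fun u ↦ G.closedNeighborFinset u ∩ S = ∅) := by
  intro u
  by_cases hu : G.closedNeighborFinset u ∩ S = ∅
  · exact ⟨u, mem_inter.mpr ⟨mem_insert_self u _, by simp [hu]⟩⟩
  · obtain ⟨x, hx⟩ := nonempty_iff_ne_empty.mpr hu
    exact ⟨x, inter_subset_inter_left subset_union_left hx⟩

end SimpleGraph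

open SimpleGraph in
theorem stmt_2_general {V : Type*} [Fintype V] [DecidableEq V]
    (G : SimpleGraph V) [DecidableRel G.Adj]
    (hconn : G.Connected) (hdiam : ∀ u v : V, G.dist u v ≤ 2)
    (htwinfree : ∀ u v : V,
      insert u (G.neighborFinset u) = insert v (G.neighborFinset v) → u = v)
    (S : Finset V)
    (hres : ∀ u v : V, u ≠ v → ∃ x ∈ S, G.dist x u ≠ G.dist x v)
    (hSmin : ∀ T : Finset V,
      (∀ u v : V, u ≠ v → ∃ x ∈ T, G.dist x u ≠ G.dist x v) → S.card ≤ T.card)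
    (C : Finset V)
    (hsep : ∀ u v : V,
      (insert u (G.neighborFinset u)) ∩ C = (insert v (G.neighborFinset v)) ∩ C → u = v)
    (hCmin : ∀ D : Finset V,
      (∀ u : V, ((insert u (G.neighborFinset u)) ∩ D).Nonempty) →
      (∀ u v : V,
        (insert u (G.neighborFinset u)) ∩ D = (insert v (G.neighborFinset v)) ∩ D → u = v) →
      C.card ≤ D.card) :
    S.card ≤ C.card ∧ C.card ≤ 2 * S.card + 2 := by
  have hlocating := IsResolvingSet.isLocatingSet hconn hdiam hres
  obtain ⟨D, hSD, hDsep, hDcard⟩ := hlocating.exists_isSeparatingSet_card_le htwinfree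
  set U := univ.filter fun u ↦ G.closedNeighborFinset u ∩ S = ∅
  have hdom : G.IsDominatingSet (D ∪ U) :=
    (isDominatingSet_union_filter S).mono (union_subset_union hSD subset_rfl)
  have hsepDU : G.IsSeparatingSet (D ∪ U) := hDsep.mono subset_union_left
  have hU : #U ≤ 1 := hlocating.card_filter_inter_eq_empty_le_one
  refine ⟨hSmin C (IsSeparatingSet.isResolvingSet hconn hdiam hsep), ?_⟩
  calc #C ≤ #(D ∪ U) := hCmin _ hdom hsepDU
    _ ≤ #D + #U := card_union_le D U
    _ ≤ 2 * #S + 2 := by omega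

/-- Let `G` be a twin-free graph of diameter 2. Then `β(G) ≤ γID(G) ≤ 2·β(G) + 2`,
stated via a minimum resolving set `S` (of size `β(G)`) and a minimum identifying code `C`
(of size `γID(G)`). -/
theorem stmt_2 {V : Type*} [Fintype V] [DecidableEq V]
    (G : SimpleGraph V) [DecidableRel G.Adj]
    (hconn : G.Connected) (hdiam : ∀ u v : V, G.dist u v ≤ 2)
    (htwinfree : ∀ u v : V,
      insert u (G.neighborFinset u) = insert v (G.neighborFinset v) → u = v)
    (S : Finset V)
    (hres : ∀ u v : V, u ≠ v → ∃ x ∈ S, G.dist x u ≠ G.dist x v)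
    (hSmin : ∀ T : Finset V,
      (∀ u v : V, u ≠ v → ∃ x ∈ T, G.dist x u ≠ G.dist x v) → S.card ≤ T.card)
    (C : Finset V)
    (hdom : ∀ u : V, ((insert u (G.neighborFinset u)) ∩ C).Nonempty)
    (hsep : ∀ u v : V,
      (insert u (G.neighborFinset u)) ∩ C = (insert v (G.neighborFinset v)) ∩ C → u = v)
    (hCmin : ∀ D : Finset V,
      (∀ u : V, ((insert u (G.neighborFinset u)) ∩ D).Nonempty) →
      (∀ u v : V,
        (insert u (G.neighborFinset u)) ∩ D = (insert v (G.neighborFinset v)) ∩ D → u = v) →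
      C.card ≤ D.card) :
    S.card ≤ C.card ∧ C.card ≤ 2 * S.card + 2 :=
  stmt_2_general G hconn hdiam htwinfree S hres hSmin C hsep hCmin
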